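/- arXiv:2210.07606 — 4 statements merged into one kernel-verified Lean document; each statement's English description precedes it below -/
import Mathlib

section
/- Let N be a positive natural number, let be an N×N real matrix that is row-stochastic (all entries nonnegative and every row sums to 1), and let Z be an N×2 real matrix each of whose rows is a standard basis vector of ℝ² (a one-hot label matrix with C = 2 classes). Define the post-diversification similarity matrix S(I−Â,Z) = (I−Â)·Z·Zᵀ·(I−Â)ᵀ. Then for any two indices v, u with different labels (i.e., row v of Z is not equal to row u of Z), the entry S(I−Â,Z)_{v,u} is ≤ 0. -/
open Matrix

/-!
The rows of `Z` sum to one and `(1 - Â) 𝟙 = 0`, so the second column of `(1 - Â) Z` is the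
negative of the first one, `y = (1 - Â) z` with `z` the indicator of class `0`; hence
`S(I - Â, Z)_{vu} = 2 y_v y_u`. Since `Â` averages, `(Â z)_v ∈ [0, 1]`, so `y_v = z_v - (Â z)_v`
is `≥ 0` on class `0` and `≤ 0` on class `1`, and nodes of different classes give opposite signs.
-/

section
variable {R n : Type*} [CommRing R] [PartialOrder R] [IsOrderedRing R] [Fintype n] [DecidableEq n]
  {A : Matrix n n R} {x : n → R}

lemma mulVec_le_one_of_mem_rowStochastic (hA : A ∈ rowStochastic R n) (hx : ∀ i, x i ≤ 1)
    (i : n) : (A *ᵥ x) i ≤ 1 := by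
  have := nonneg_mulVec_of_mem_rowStochastic hA (x := 1 - x) (fun j => sub_nonneg.2 (hx j)) i
  rwa [mulVec_sub, one_vecMul_of_mem_rowStochastic hA, Pi.sub_apply, Pi.one_apply,
    sub_nonneg] at this

lemma one_sub_mulVec_one_of_mem_rowStochastic (hA : A ∈ rowStochastic R n) :
    (1 - A) *ᵥ 1 = 0 := by
  rw [sub_mulVec, one_mulVec, one_vecMul_of_mem_rowStochastic hA, sub_self]

lemma one_sub_mulVec_apply_nonneg_of_eq_one (hA : A ∈ rowStochastic R n) (hx : ∀ i, x i ≤ 1)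
    {v : n} (hv : x v = 1) : 0 ≤ ((1 - A) *ᵥ x) v := by
  rw [sub_mulVec, one_mulVec, Pi.sub_apply, hv, sub_nonneg]
  exact mulVec_le_one_of_mem_rowStochastic hA hx v

lemma one_sub_mulVec_apply_nonpos_of_eq_zero (hA : A ∈ rowStochastic R n) (hx : ∀ i, 0 ≤ x i)
    {v : n} (hv : x v = 0) : ((1 - A) *ᵥ x) v ≤ 0 := by
  rw [sub_mulVec, one_mulVec, Pi.sub_apply, hv, zero_sub, neg_nonpos]
  exact nonneg_mulVec_of_mem_rowStochastic hA hx v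

end

section
variable {R m n : Type*} [CommRing R] [Fintype n]

lemma mul_apply_eq_mulVec_col {o : Type*} (M : Matrix m n R) (Z : Matrix n o R) (w : m) (c : o) :
    (M * Z) w c = (M *ᵥ fun j => Z j c) w := rfl

lemma mul_mul_transpose_mul_transpose_apply_of_fin_two (M : Matrix m n R) (Z : Matrix n (Fin 2) R)
    (hM : M *ᵥ 1 = 0) (hZ : ∀ j, Z j 0 + Z j 1 = 1) (v u : m) :
    (M * Z * Zᵀ * Mᵀ) v u = 2 * ((M *ᵥ fun j => Z j 0) v * (M *ᵥ fun j => Z j 0) u) := by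
  have hcol : (fun j => Z j 1) = 1 - fun j => Z j 0 := funext fun j => eq_sub_of_add_eq' (hZ j)
  have hMcol : M *ᵥ (fun j => Z j 1) = -(M *ᵥ fun j => Z j 0) := by
    rw [hcol, mulVec_sub, hM, zero_sub]
  have hgram : M * Z * Zᵀ * Mᵀ = M * Z * (M * Z)ᵀ := by rw [transpose_mul, ← Matrix.mul_assoc]
  rw [hgram, mul_apply, Fin.sum_univ_two]
  simp only [transpose_apply, mul_apply_eq_mulVec_col, hMcol, Pi.neg_apply]
  ring

end

lemma oneHot_fin_two {R : Type*} [Ring R] {z : Fin 2 → R}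
    (hz : ∃ k : Fin 2, ∀ c, z c = if c = k then 1 else 0) :
    z 0 + z 1 = 1 ∧ (z 0 = 0 ∨ z 0 = 1) := by
  obtain ⟨k, hk⟩ := hz
  fin_cases k <;> simp [hk]

theorem stmt_0_general (N : ℕ)
    (A : Matrix (Fin N) (Fin N) ℝ)
    (hA_nonneg : ∀ i j, 0 ≤ A i j)
    (hA_rowsum : ∀ i, ∑ j, A i j = 1)
    (Z : Matrix (Fin N) (Fin 2) ℝ)
    (hZ : ∀ v, ∃ k : Fin 2, ∀ c, Z v c = if c = k then 1 else 0)
    (v u : Fin N) (hvu : Z v ≠ Z u) :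
    ((1 - A) * Z * Zᵀ * (1 - A)ᵀ : Matrix (Fin N) (Fin N) ℝ) v u ≤ 0 := by
  have hA : A ∈ rowStochastic ℝ (Fin N) := mem_rowStochastic_iff_sum.2 ⟨hA_nonneg, hA_rowsum⟩
  have hsum j := (oneHot_fin_two (hZ j)).1
  have hbit j := (oneHot_fin_two (hZ j)).2
  rw [mul_mul_transpose_mul_transpose_apply_of_fin_two _ _
    (one_sub_mulVec_one_of_mem_rowStochastic hA) hsum]
  set x : Fin N → ℝ := fun j => Z j 0
  have hx_nonneg j : 0 ≤ x j := by rcases hbit j with h | h <;> simp [x, h]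
  have hx_le_one j : x j ≤ 1 := by rcases hbit j with h | h <;> simp [x, h]
  have hx_ne : x v ≠ x u := fun h => hvu <| funext <| Fin.forall_fin_two.2
    ⟨h, by linarith [hsum v, hsum u, show Z v 0 = Z u 0 from h]⟩
  refine mul_nonpos_of_nonneg_of_nonpos zero_le_two ?_
  rcases hbit v with hv | hv <;> rcases hbit u with hu | hu
  · exact absurd (hv.trans hu.symm) hx_ne
  · exact mul_nonpos_of_nonpos_of_nonneg
      (one_sub_mulVec_apply_nonpos_of_eq_zero hA hx_nonneg hv)
      (one_sub_mulVec_apply_nonneg_of_eq_one hA hx_le_one hu)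
  · exact mul_nonpos_of_nonneg_of_nonpos
      (one_sub_mulVec_apply_nonneg_of_eq_one hA hx_le_one hv)
      (one_sub_mulVec_apply_nonpos_of_eq_zero hA hx_nonneg hu)
  · exact absurd (hv.trans hu.symm) hx_ne

/-- For a row-stochastic `Â` and a one-hot label matrix `Z` with 2 classes, the
post-diversification similarity `S(I−Â,Z) = (I−Â)ZZᵀ(I−Â)ᵀ` is nonpositive at any
pair of differently-labeled nodes. -/
theorem stmt_0 (N : ℕ) (hN : 0 < N)
    (A : Matrix (Fin N) (Fin N) ℝ)
    (hA_nonneg : ∀ i j, 0 ≤ A i j)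
    (hA_rowsum : ∀ i, ∑ j, A i j = 1)
    (Z : Matrix (Fin N) (Fin 2) ℝ)
    (hZ : ∀ v, ∃ k : Fin 2, ∀ c, Z v c = if c = k then 1 else 0)
    (v u : Fin N) (hvu : Z v ≠ Z u) :
    ((1 - A) * Z * Zᵀ * (1 - A)ᵀ : Matrix (Fin N) (Fin N) ℝ) v u ≤ 0 :=
  stmt_0_general N A hA_nonneg hA_rowsum Z hZ v u hvu
end

section
/- (Theorem 1 of the paper.) Let N be a positive natural number, let be an N×N real row-stochastic matrix (all entries nonnegative, every row sums to 1), and let Z be an N×2 one-hot label matrix (C = 2 classes), where each class is nonempty. Then every node v is diversification distinguishable, i.e., for every index v: the average of S(I−Â,Z)_{v,u} over all u with the same label as v is ≥ 0, and the average of S(I−Â,Z)_{v,u} over all u with a different label from v is ≤ 0. Consequently the graph diversification distinguishability value DD_{Â,Z} — the fraction of nodes that are diversification distinguishable — equals 1. -/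
open Matrix Finset
open scoped Classical

/-!
Write `B = (I - Â) Z`, so that `S(I - Â, Z) = B Bᵀ`. Since `Â` is row-stochastic, `(ÂZ)_{v,c}`
is a convex combination of zeros and ones, hence lies in `[0, 1]`; therefore `B_{v,c}` is
`≥ 0` in the column of `v`'s own class and `≤ 0` in every other column. For nodes `v, u` of the
same class every term of `(B Bᵀ)_{v,u} = ∑_c B_{v,c} B_{u,c}` is a product of two numbers of
equal sign. With only two classes, for nodes of different classes each column is the class of
exactly one of them, so every term is a product of numbers of opposite sign. The class means of
`S` thus have the required signs at every node, and `DD = 1`.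
-/

namespace Matrix

variable {n κ : Type*} [Fintype n] [DecidableEq n] {A : Matrix n n ℝ} {Z : Matrix n κ ℝ}

theorem one_sub_mul_apply (v : n) (c : κ) :
    ((1 - A) * Z : Matrix n κ ℝ) v c = Z v c - ∑ j, A v j * Z j c := by
  rw [Matrix.sub_mul, Matrix.one_mul, sub_apply, mul_apply]

theorem one_sub_mul_mul_transpose_apply [Fintype κ] (v u : n) :
    ((1 - A) * Z * Zᵀ * (1 - A)ᵀ : Matrix n n ℝ) v u =
      ∑ c, ((1 - A) * Z : Matrix n κ ℝ) v c * ((1 - A) * Z : Matrix n κ ℝ) u c := by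
  rw [Matrix.mul_assoc ((1 - A) * Z), ← transpose_mul, mul_apply]
  rfl

variable [DecidableEq κ] {lab : n → κ}

theorem one_sub_mul_oneHot_apply_label_nonneg (hA_nonneg : ∀ i j, 0 ≤ A i j)
    (hA_rowsum : ∀ i, ∑ j, A i j = 1) (hZ : ∀ v c, Z v c = if c = lab v then 1 else 0)
    (v : n) : 0 ≤ ((1 - A) * Z : Matrix n κ ℝ) v (lab v) := by
  rw [one_sub_mul_apply, hZ, if_pos rfl, sub_nonneg, ← hA_rowsum v]
  exact sum_le_sum fun j _ =>
    mul_le_of_le_one_right (hA_nonneg v j) (by rw [hZ]; split_ifs <;> norm_num)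

theorem one_sub_mul_oneHot_apply_nonpos_of_ne (hA_nonneg : ∀ i j, 0 ≤ A i j)
    (hZ : ∀ v c, Z v c = if c = lab v then 1 else 0) {v : n} {c : κ} (hc : c ≠ lab v) :
    ((1 - A) * Z : Matrix n κ ℝ) v c ≤ 0 := by
  rw [one_sub_mul_apply, hZ, if_neg hc, zero_sub, neg_nonpos]
  exact sum_nonneg fun j _ => mul_nonneg (hA_nonneg v j) (by rw [hZ]; split_ifs <;> norm_num)

theorem highPass_similarity_nonneg_of_label_eq [Fintype κ] (hA_nonneg : ∀ i j, 0 ≤ A i j)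
    (hA_rowsum : ∀ i, ∑ j, A i j = 1) (hZ : ∀ v c, Z v c = if c = lab v then 1 else 0)
    {v u : n} (h : lab u = lab v) : 0 ≤ ((1 - A) * Z * Zᵀ * (1 - A)ᵀ : Matrix n n ℝ) v u := by
  rw [one_sub_mul_mul_transpose_apply]
  refine sum_nonneg fun c _ => ?_
  by_cases hc : c = lab v
  · subst hc
    exact mul_nonneg (one_sub_mul_oneHot_apply_label_nonneg hA_nonneg hA_rowsum hZ v)
      (h ▸ one_sub_mul_oneHot_apply_label_nonneg hA_nonneg hA_rowsum hZ u)
  · exact mul_nonneg_of_nonpos_of_nonpos (one_sub_mul_oneHot_apply_nonpos_of_ne hA_nonneg hZ hc)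
      (one_sub_mul_oneHot_apply_nonpos_of_ne hA_nonneg hZ (h ▸ hc))

theorem highPass_similarity_nonpos_of_label_ne {Z : Matrix n (Fin 2) ℝ} {lab : n → Fin 2}
    (hA_nonneg : ∀ i j, 0 ≤ A i j) (hA_rowsum : ∀ i, ∑ j, A i j = 1)
    (hZ : ∀ v c, Z v c = if c = lab v then 1 else 0) {v u : n} (h : lab u ≠ lab v) :
    ((1 - A) * Z * Zᵀ * (1 - A)ᵀ : Matrix n n ℝ) v u ≤ 0 := by
  rw [one_sub_mul_mul_transpose_apply]
  refine sum_nonpos fun c _ => ?_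
  by_cases hc : c = lab v
  · subst hc
    exact mul_nonpos_of_nonneg_of_nonpos
      (one_sub_mul_oneHot_apply_label_nonneg hA_nonneg hA_rowsum hZ v)
      (one_sub_mul_oneHot_apply_nonpos_of_ne hA_nonneg hZ (Ne.symm h))
  · obtain rfl : c = lab u := by omega
    exact mul_nonpos_of_nonpos_of_nonneg (one_sub_mul_oneHot_apply_nonpos_of_ne hA_nonneg hZ hc)
      (one_sub_mul_oneHot_apply_label_nonneg hA_nonneg hA_rowsum hZ u)

end Matrix

theorem stmt_2_general (N : ℕ) (hN : 0 < N)
    (A : Matrix (Fin N) (Fin N) ℝ)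
    (hA_nonneg : ∀ i j, 0 ≤ A i j)
    (hA_rowsum : ∀ i, ∑ j, A i j = 1)
    (lab : Fin N → Fin 2)
    (Z : Matrix (Fin N) (Fin 2) ℝ)
    (hZ : ∀ v c, Z v c = if c = lab v then 1 else 0) :
    (∀ v : Fin N,
      0 ≤ (∑ u ∈ Finset.univ.filter (fun u => lab u = lab v),
            ((1 - A) * Z * Zᵀ * (1 - A)ᵀ : Matrix (Fin N) (Fin N) ℝ) v u) /
          ((Finset.univ.filter (fun u => lab u = lab v)).card : ℝ) ∧
      (∑ u ∈ Finset.univ.filter (fun u => lab u ≠ lab v),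
            ((1 - A) * Z * Zᵀ * (1 - A)ᵀ : Matrix (Fin N) (Fin N) ℝ) v u) /
          ((Finset.univ.filter (fun u => lab u ≠ lab v)).card : ℝ) ≤ 0) ∧
    ((Finset.univ.filter (fun v : Fin N =>
        0 ≤ (∑ u ∈ Finset.univ.filter (fun u => lab u = lab v),
              ((1 - A) * Z * Zᵀ * (1 - A)ᵀ : Matrix (Fin N) (Fin N) ℝ) v u) /
            ((Finset.univ.filter (fun u => lab u = lab v)).card : ℝ) ∧
        (∑ u ∈ Finset.univ.filter (fun u => lab u ≠ lab v),
              ((1 - A) * Z * Zᵀ * (1 - A)ᵀ : Matrix (Fin N) (Fin N) ℝ) v u) /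
            ((Finset.univ.filter (fun u => lab u ≠ lab v)).card : ℝ) ≤ 0)).card : ℝ)
      / (N : ℝ) = 1 := by
  have hdist : ∀ v : Fin N,
      0 ≤ (∑ u ∈ univ.filter (fun u => lab u = lab v), ((1 - A) * Z * Zᵀ * (1 - A)ᵀ :
            Matrix (Fin N) (Fin N) ℝ) v u) /
          ((univ.filter (fun u => lab u = lab v)).card : ℝ) ∧
      (∑ u ∈ univ.filter (fun u => lab u ≠ lab v), ((1 - A) * Z * Zᵀ * (1 - A)ᵀ :
            Matrix (Fin N) (Fin N) ℝ) v u) /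
          ((univ.filter (fun u => lab u ≠ lab v)).card : ℝ) ≤ 0 := fun v =>
    ⟨div_nonneg (sum_nonneg fun u hu => highPass_similarity_nonneg_of_label_eq hA_nonneg
        hA_rowsum hZ (mem_filter.mp hu).2) (Nat.cast_nonneg _),
      div_nonpos_of_nonpos_of_nonneg (sum_nonpos fun u hu => highPass_similarity_nonpos_of_label_ne
        hA_nonneg hA_rowsum hZ (mem_filter.mp hu).2) (Nat.cast_nonneg _)⟩
  refine ⟨hdist, ?_⟩
  rw [filter_true_of_mem fun v _ => hdist v, card_univ, Fintype.card_fin]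
  exact div_self (Nat.cast_ne_zero.mpr hN.ne')

/-- Theorem 1 of the paper: for `C = 2` classes, `X = Z`, and any row-stochastic
aggregation operator `Â`, every node is diversification distinguishable and
`DD_{Â,Z}(G) = 1`. -/
theorem stmt_2 (N : ℕ) (hN : 0 < N)
    (A : Matrix (Fin N) (Fin N) ℝ)
    (hA_nonneg : ∀ i j, 0 ≤ A i j)
    (hA_rowsum : ∀ i, ∑ j, A i j = 1)
    (lab : Fin N → Fin 2)
    (Z : Matrix (Fin N) (Fin 2) ℝ)
    (hZ : ∀ v c, Z v c = if c = lab v then 1 else 0)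
    (hne : ∀ k : Fin 2, ∃ v, lab v = k) :
    (∀ v : Fin N,
      0 ≤ (∑ u ∈ Finset.univ.filter (fun u => lab u = lab v),
            ((1 - A) * Z * Zᵀ * (1 - A)ᵀ : Matrix (Fin N) (Fin N) ℝ) v u) /
          ((Finset.univ.filter (fun u => lab u = lab v)).card : ℝ) ∧
      (∑ u ∈ Finset.univ.filter (fun u => lab u ≠ lab v),
            ((1 - A) * Z * Zᵀ * (1 - A)ᵀ : Matrix (Fin N) (Fin N) ℝ) v u) /
          ((Finset.univ.filter (fun u => lab u ≠ lab v)).card : ℝ) ≤ 0) ∧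
    ((Finset.univ.filter (fun v : Fin N =>
        0 ≤ (∑ u ∈ Finset.univ.filter (fun u => lab u = lab v),
              ((1 - A) * Z * Zᵀ * (1 - A)ᵀ : Matrix (Fin N) (Fin N) ℝ) v u) /
            ((Finset.univ.filter (fun u => lab u = lab v)).card : ℝ) ∧
        (∑ u ∈ Finset.univ.filter (fun u => lab u ≠ lab v),
              ((1 - A) * Z * Zᵀ * (1 - A)ᵀ : Matrix (Fin N) (Fin N) ℝ) v u) /
            ((Finset.univ.filter (fun u => lab u ≠ lab v)).card : ℝ) ≤ 0)).card : ℝ)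
      / (N : ℝ) = 1 :=
  stmt_2_general N hN A hA_nonneg hA_rowsum lab Z hZ
end

section
/- Let N and C be positive natural numbers, let be an N×N real matrix whose rows each sum to 1, and let Z be an N×C one-hot label matrix. Write W = ÂZ, and for a node v let c_v denote the class of v (so row v of Z equals e_{c_v}). Then for any two indices v, u belonging to different classes (c_v ≠ c_u), the entry of S(I−Â,Z) = (I−Â)ZZᵀ(I−Â)ᵀ at position (v,u) equals (Σ_{c=1}^{C} W_{v,c}·W_{u,c}) − W_{v,c_u} − W_{u,c_v}. -/
/-! Since `(I − Â)Z = Z − W`, the entry is the dot product of rows `v` and `u` of `Z − W`; expanding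
it, each product with a one-hot row of `Z` picks out a single entry, and `Z_v · Z_u = 0` for
different classes. -/

open Matrix Finset

section OneHot

variable {R n k : Type*} [CommRing R] [Fintype k] [DecidableEq k]

lemma sum_oneHot_mul (Z : Matrix n k R) (lab : n → k)
    (hZ : ∀ v c, Z v c = if c = lab v then 1 else 0) (v : n) (x : k → R) :
    ∑ c, Z v c * x c = x (lab v) := by
  simp [hZ]

lemma sub_mul_transpose_sub_apply_of_oneHot (Z W : Matrix n k R) (lab : n → k)
    (hZ : ∀ v c, Z v c = if c = lab v then 1 else 0) (v u : n) :
    ((Z - W) * (Z - W)ᵀ) v u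
      = (if lab v = lab u then 1 else 0) + ∑ c, W v c * W u c - W v (lab u) - W u (lab v) := by
  have hZZ : ∑ c, Z v c * Z u c = if lab v = lab u then 1 else 0 := by
    rw [sum_oneHot_mul Z lab hZ, hZ]
  have hZW : ∑ c, Z v c * W u c = W u (lab v) := sum_oneHot_mul Z lab hZ v _
  have hWZ : ∑ c, W v c * Z u c = W v (lab u) := by
    simp_rw [mul_comm (W v _)]
    exact sum_oneHot_mul Z lab hZ u _
  simp only [mul_apply, transpose_apply, Matrix.sub_apply, sub_mul, mul_sub, sum_sub_distrib,
    hZZ, hZW, hWZ]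
  ring

end OneHot

theorem stmt_3_general (N C : ℕ)
    (A : Matrix (Fin N) (Fin N) ℝ)
    (lab : Fin N → Fin C)
    (Z : Matrix (Fin N) (Fin C) ℝ)
    (hZ : ∀ v c, Z v c = if c = lab v then 1 else 0)
    (v u : Fin N) (hvu : lab v ≠ lab u) :
    ((1 - A) * Z * Zᵀ * (1 - A)ᵀ : Matrix (Fin N) (Fin N) ℝ) v u
      = (∑ c, (A * Z) v c * (A * Z) u c) - (A * Z) v (lab u) - (A * Z) u (lab v) := by
  have hS : (1 - A) * Z * Zᵀ * (1 - A)ᵀ = (Z - A * Z) * (Z - A * Z)ᵀ := by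
    rw [Matrix.mul_assoc, ← transpose_mul, Matrix.sub_mul, Matrix.one_mul]
  rw [hS, sub_mul_transpose_sub_apply_of_oneHot Z (A * Z) lab hZ, if_neg hvu, zero_add]

/-- With `W = ÂZ` and nodes `v, u` in different classes, the entry of
`S(I−Â,Z) = (I−Â)ZZᵀ(I−Â)ᵀ` is `∑_c W_{v,c} W_{u,c} − W_{v,c_u} − W_{u,c_v}`. -/
theorem stmt_3 (N C : ℕ) (hN : 0 < N) (hC : 0 < C)
    (A : Matrix (Fin N) (Fin N) ℝ)
    (hA_rowsum : ∀ i, ∑ j, A i j = 1)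
    (lab : Fin N → Fin C)
    (Z : Matrix (Fin N) (Fin C) ℝ)
    (hZ : ∀ v c, Z v c = if c = lab v then 1 else 0)
    (v u : Fin N) (hvu : lab v ≠ lab u) :
    ((1 - A) * Z * Zᵀ * (1 - A)ᵀ : Matrix (Fin N) (Fin N) ℝ) v u
      = (∑ c, (A * Z) v c * (A * Z) u c) - (A * Z) v (lab u) - (A * Z) u (lab v) :=
  stmt_3_general N C A lab Z hZ v u hvu
end

section
/- Let N be a positive natural number, let be an N×N real row-stochastic matrix (all entries nonnegative, every row sums to 1), and let Z be an N×2 one-hot label matrix with classes denoted 1 and 2. Write W = ÂZ. Then for any two indices v, u in different classes (c_v ≠ c_u), the entry of S(I−Â,Z) = (I−Â)ZZᵀ(I−Â)ᵀ at position (v,u) equals W_{v,c_u}·(W_{u,c_u} − 1) + W_{u,c_v}·(W_{v,c_v} − 1), and since all entries of W lie in [0,1], each of the two summands is ≤ 0. -/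
/-!
Write `W = ÂZ`, so that `(I − Â)Z = Z − W` and `S(I − Â, Z) = (Z − W)(Z − W)ᵀ`. With two
classes and `c_v ≠ c_u`, the `(v, u)` entry is a sum over just `c = c_v` and `c = c_u`, where
`Z_{v,c}` and `Z_{u,c}` are `1` and `0` in some order; this gives the two products. Rows of a
row-stochastic matrix are convex weights, so every entry of `W` is an average of entries of `Z`
and lies in `[0, 1]`, which makes each product nonpositive.
-/

open Matrix Finset

namespace Matrix

variable {ι κ R : Type*}

def oneHot [Zero R] [One R] [DecidableEq κ] (lab : ι → κ) : Matrix ι κ R :=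
  of fun v c => if c = lab v then 1 else 0

theorem oneHot_apply_mem_Icc [Semiring R] [PartialOrder R] [IsOrderedRing R] [DecidableEq κ]
    (lab : ι → κ) (v : ι) (c : κ) : oneHot lab v c ∈ Set.Icc (0 : R) 1 := by
  rw [oneHot, of_apply]
  split_ifs <;> simp

theorem mul_apply_mem_Icc_of_mem_rowStochastic [Fintype ι] [DecidableEq ι] [Semiring R]
    [PartialOrder R] [IsOrderedRing R]
    {M : Matrix ι ι R} (hM : M ∈ rowStochastic R ι) {Z : Matrix ι κ R}
    (hZ : ∀ j c, Z j c ∈ Set.Icc 0 1) (i : ι) (c : κ) : (M * Z) i c ∈ Set.Icc 0 1 := by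
  rw [mul_apply]
  refine ⟨sum_nonneg fun j _ => mul_nonneg (nonneg_of_mem_rowStochastic hM) (hZ j c).1, ?_⟩
  calc ∑ j, M i j * Z j c ≤ ∑ j, M i j :=
        sum_le_sum fun j _ => mul_le_of_le_one_right (nonneg_of_mem_rowStochastic hM) (hZ j c).2
    _ = 1 := sum_row_of_mem_rowStochastic hM i

theorem highPass_oneHot_gram_apply [Fintype ι] [DecidableEq ι] [CommRing R] (A : Matrix ι ι R)
    {lab : ι → Fin 2} {Z : Matrix ι (Fin 2) R} (hZ : Z = oneHot lab) {v u : ι}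
    (hvu : lab v ≠ lab u) :
    ((1 - A) * Z * Zᵀ * (1 - A)ᵀ : Matrix ι ι R) v u
      = (A * Z) v (lab u) * ((A * Z) u (lab u) - 1)
        + (A * Z) u (lab v) * ((A * Z) v (lab v) - 1) := by
  rw [Matrix.mul_assoc _ _ (1 - A)ᵀ, ← transpose_mul, Matrix.sub_mul, Matrix.one_mul, mul_apply]
  have two_classes : ∀ c : Fin 2, c ≠ lab v ∧ c ≠ lab u →
      (Z - A * Z) v c * (Z - A * Z)ᵀ c u = 0 := by
    omega
  rw [Fintype.sum_eq_add _ _ hvu two_classes]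
  simp only [transpose_apply, Matrix.sub_apply, hZ, oneHot, of_apply, if_pos, hvu, hvu.symm,
    if_false]
  ring

end Matrix

theorem stmt_17_general (N : ℕ)
    (A : Matrix (Fin N) (Fin N) ℝ)
    (hA_nonneg : ∀ i j, 0 ≤ A i j)
    (hA_rowsum : ∀ i, ∑ j, A i j = 1)
    (lab : Fin N → Fin 2)
    (Z : Matrix (Fin N) (Fin 2) ℝ)
    (hZ : ∀ v c, Z v c = if c = lab v then 1 else 0)
    (v u : Fin N) (hvu : lab v ≠ lab u) :
    ((1 - A) * Z * Zᵀ * (1 - A)ᵀ : Matrix (Fin N) (Fin N) ℝ) v u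
        = (A * Z) v (lab u) * ((A * Z) u (lab u) - 1)
          + (A * Z) u (lab v) * ((A * Z) v (lab v) - 1)
      ∧ (A * Z) v (lab u) * ((A * Z) u (lab u) - 1) ≤ 0
      ∧ (A * Z) u (lab v) * ((A * Z) v (lab v) - 1) ≤ 0 := by
  have hZ_oneHot : Z = oneHot lab := ext hZ
  have hA : A ∈ rowStochastic ℝ (Fin N) :=
    mem_rowStochastic_iff_sum.2 ⟨hA_nonneg, hA_rowsum⟩
  have hW := mul_apply_mem_Icc_of_mem_rowStochastic hA (hZ_oneHot ▸ oneHot_apply_mem_Icc lab)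
  refine ⟨highPass_oneHot_gram_apply A hZ_oneHot hvu, ?_, ?_⟩
  · exact mul_nonpos_of_nonneg_of_nonpos (hW v _).1 (sub_nonpos.2 (hW u _).2)
  · exact mul_nonpos_of_nonneg_of_nonpos (hW u _).1 (sub_nonpos.2 (hW v _).2)

/-- For `C = 2` classes, a row-stochastic `Â` and one-hot `Z`, writing `W = ÂZ`,
for nodes `v, u` in different classes the entry of `S(I−Â,Z) = (I−Â)ZZᵀ(I−Â)ᵀ`
equals `W_{v,c_u}(W_{u,c_u} − 1) + W_{u,c_v}(W_{v,c_v} − 1)`, and each of the two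
summands is nonpositive since all entries of `W` lie in `[0,1]`. -/
theorem stmt_17 (N : ℕ) (hN : 0 < N)
    (A : Matrix (Fin N) (Fin N) ℝ)
    (hA_nonneg : ∀ i j, 0 ≤ A i j)
    (hA_rowsum : ∀ i, ∑ j, A i j = 1)
    (lab : Fin N → Fin 2)
    (Z : Matrix (Fin N) (Fin 2) ℝ)
    (hZ : ∀ v c, Z v c = if c = lab v then 1 else 0)
    (v u : Fin N) (hvu : lab v ≠ lab u) :
    ((1 - A) * Z * Zᵀ * (1 - A)ᵀ : Matrix (Fin N) (Fin N) ℝ) v u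
        = (A * Z) v (lab u) * ((A * Z) u (lab u) - 1)
          + (A * Z) u (lab v) * ((A * Z) v (lab v) - 1)
      ∧ (A * Z) v (lab u) * ((A * Z) u (lab u) - 1) ≤ 0
      ∧ (A * Z) u (lab v) * ((A * Z) v (lab v) - 1) ≤ 0 :=
  stmt_17_general N A hA_nonneg hA_rowsum lab Z hZ v u hvu
end
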